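/- arXiv:2509.19554 — 3 statements merged into one kernel-verified Lean document; each statement's English description precedes it below -/
import Mathlib

section
/- Let L be a loss bounded by ℓ, and for a predictor f let L(f(x)) ∈ ℝ^K denote the vector of losses over labels. Suppose R_tar(f, D) = (1/n) ∑_i q_tar(x_i)ᵀ L(f(x_i)) with x_i i.i.d., and R(f) = E_x[ q*(x)ᵀ L(f(x)) ]. Then E_D[(R_tar(f,D) - R(f))²] ≤ (1/n) Var_x[q_tar(x)ᵀ L(f(x))] + ℓ² K (E_x ‖q_tar(x) - q*(x)‖₂)². -/
open MeasureTheory ProbabilityTheory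

/-!
With `g = q_tarᵀL` and `h = q*ᵀL`, the estimator is the empirical mean of the i.i.d. variables
`g (X i)`, so its mean squared deviation from `R(f) = E h` splits into variance plus squared
bias: `Var g / n + (E g - E h)²`. The bias is bounded pointwise by Cauchy–Schwarz,
`|(q_tar - q*)ᵀL| ≤ ℓ √K ‖q_tar - q*‖₂`, and then integrated.
-/

section WeightedSums

variable {ι : Type*} [Fintype ι]

lemma abs_sum_mul_le_of_sum_eq_one {p b : ι → ℝ} {ℓ : ℝ} (hp0 : ∀ k, 0 ≤ p k)
    (hp1 : ∑ k, p k = 1) (hb : ∀ k, |b k| ≤ ℓ) : |∑ k, p k * b k| ≤ ℓ :=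
  calc |∑ k, p k * b k| ≤ ∑ k, p k * |b k| := by
        simpa only [abs_mul, abs_of_nonneg (hp0 _)] using
          Finset.abs_sum_le_sum_abs (fun k => p k * b k) Finset.univ
    _ ≤ ∑ k, p k * ℓ := Finset.sum_le_sum fun k _ => mul_le_mul_of_nonneg_left (hb k) (hp0 k)
    _ = ℓ := by rw [← Finset.sum_mul, hp1, one_mul]

lemma le_one_of_sum_eq_one {p : ι → ℝ} (hp0 : ∀ k, 0 ≤ p k) (hp1 : ∑ k, p k = 1)
    (k : ι) : p k ≤ 1 :=
  hp1 ▸ Finset.single_le_sum (fun j _ => hp0 j) (Finset.mem_univ k)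

lemma sum_sub_sq_le_card_of_sum_eq_one {p q : ι → ℝ} (hp0 : ∀ k, 0 ≤ p k)
    (hp1 : ∑ k, p k = 1) (hq0 : ∀ k, 0 ≤ q k) (hq1 : ∑ k, q k = 1) :
    ∑ k, (p k - q k) ^ 2 ≤ Fintype.card ι := by
  rw [← Finset.card_univ, ← nsmul_one, ← Finset.sum_const]
  refine Finset.sum_le_sum fun k _ => ?_
  have hp := le_one_of_sum_eq_one hp0 hp1 k
  have hq := le_one_of_sum_eq_one hq0 hq1 k
  nlinarith [hp0 k, hq0 k]

lemma abs_sum_mul_le_sqrt_card_mul_sqrt {a b : ι → ℝ} {ℓ : ℝ} (hℓ : 0 ≤ ℓ)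
    (hb : ∀ k, |b k| ≤ ℓ) :
    |∑ k, a k * b k| ≤ ℓ * √(Fintype.card ι) * √(∑ k, a k ^ 2) :=
  calc |∑ k, a k * b k| ≤ ∑ k, |a k| * |b k| := by
        simpa only [abs_mul] using Finset.abs_sum_le_sum_abs (fun k => a k * b k) Finset.univ
    _ ≤ √(∑ k, |a k| ^ 2) * √(∑ k, |b k| ^ 2) := Real.sum_mul_le_sqrt_mul_sqrt _ _ _
    _ ≤ √(∑ k, a k ^ 2) * √(∑ _k : ι, ℓ ^ 2) := by
        simp only [sq_abs]
        gcongr √(∑ k, a k ^ 2) * √?_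
        exact Finset.sum_le_sum fun k _ => sq_le_sq' (abs_le.1 (hb k)).1 (abs_le.1 (hb k)).2
    _ = ℓ * √(Fintype.card ι) * √(∑ k, a k ^ 2) := by
        rw [Finset.sum_const, Finset.card_univ, nsmul_eq_mul, Real.sqrt_mul (Nat.cast_nonneg _),
          Real.sqrt_sq hℓ]
        ring

end WeightedSums

lemma sq_integral_sum_mul_sub_le {α ι : Type*} [MeasurableSpace α] [Fintype ι] {μ : Measure α}
    {p q b : α → ι → ℝ} {ℓ : ℝ} (hℓ : 0 ≤ ℓ) (hb : ∀ x k, |b x k| ≤ ℓ)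
    (hp : Integrable (fun x => ∑ k, p x k * b x k) μ)
    (hq : Integrable (fun x => ∑ k, q x k * b x k) μ)
    (hpq : Integrable (fun x => √(∑ k, (p x k - q x k) ^ 2)) μ) :
    (∫ x, ∑ k, p x k * b x k ∂μ - ∫ x, ∑ k, q x k * b x k ∂μ) ^ 2
      ≤ ℓ ^ 2 * Fintype.card ι * (∫ x, √(∑ k, (p x k - q x k) ^ 2) ∂μ) ^ 2 := by
  have hpointwise : ∀ x, |∑ k, p x k * b x k - ∑ k, q x k * b x k|
      ≤ ℓ * √(Fintype.card ι) * √(∑ k, (p x k - q x k) ^ 2) := fun x => by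
    simpa only [← Finset.sum_sub_distrib, sub_mul] using
      abs_sum_mul_le_sqrt_card_mul_sqrt (a := fun k => p x k - q x k) hℓ (hb x)
  have habs : |∫ x, ∑ k, p x k * b x k ∂μ - ∫ x, ∑ k, q x k * b x k ∂μ|
      ≤ ℓ * √(Fintype.card ι) * ∫ x, √(∑ k, (p x k - q x k) ^ 2) ∂μ := by
    rw [← integral_sub hp hq, ← integral_const_mul]
    exact (abs_integral_le_integral_abs).trans
      (integral_mono (hp.sub hq).abs (hpq.const_mul _) hpointwise)
  calc _ ≤ (ℓ * √(Fintype.card ι) * ∫ x, √(∑ k, (p x k - q x k) ^ 2) ∂μ) ^ 2 :=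
        sq_le_sq' (abs_le.1 habs).1 (abs_le.1 habs).2
    _ = _ := by rw [mul_pow, mul_pow, Real.sq_sqrt (Nat.cast_nonneg _)]

lemma integral_sub_const_sq_eq_variance_add {Ω : Type*} [MeasurableSpace Ω] {P : Measure Ω}
    [IsProbabilityMeasure P] {Z : Ω → ℝ} (hZ : MemLp Z 2 P) (c : ℝ) :
    ∫ ω, (Z ω - c) ^ 2 ∂P = variance Z P + (∫ ω, Z ω ∂P - c) ^ 2 := by
  have hvar := variance_eq_sub (hZ.sub (memLp_const c))
  rw [show Z - (fun _ => c) = fun ω => Z ω - c from rfl,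
    variance_sub_const hZ.aestronglyMeasurable,
    integral_sub (hZ.integrable one_le_two) (integrable_const c), integral_const] at hvar
  simp only [probReal_univ, smul_eq_mul, one_mul, Pi.pow_apply] at hvar
  linarith

section EmpiricalMean

variable {Ω α : Type*} [MeasurableSpace Ω] [MeasurableSpace α] {P : Measure Ω}
  {μ : Measure α} {n : ℕ} {X : Fin n → Ω → α} {g : α → ℝ}

noncomputable def empiricalMean (X : Fin n → Ω → α) (g : α → ℝ) (ω : Ω) : ℝ :=
  (n : ℝ)⁻¹ * ∑ i, g (X i ω)

lemma memLp_empiricalMean (hX : ∀ i, MeasurePreserving (X i) P μ) (hg : MemLp g 2 μ) :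
    MemLp (empiricalMean X g) 2 P :=
  (memLp_finsetSum _ fun i _ => hg.comp_measurePreserving (hX i)).const_mul _

lemma integral_empiricalMean (hn : n ≠ 0) (hX : ∀ i, MeasurePreserving (X i) P μ)
    (hg : Integrable g μ) :
    ∫ ω, empiricalMean X g ω ∂P = ∫ x, g x ∂μ := by
  have hcomp : ∀ i, ∫ ω, g (X i ω) ∂P = ∫ x, g x ∂μ := fun i => by
    rw [← (hX i).map_eq,
      integral_map (hX i).aemeasurable ((hX i).map_eq ▸ hg.aestronglyMeasurable)]
  unfold empiricalMean
  rw [integral_const_mul,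
    integral_finsetSum (f := fun i ω => g (X i ω)) _
      fun i _ => (hX i).integrable_comp_of_integrable hg]
  simp only [hcomp, Finset.sum_const, Finset.card_univ, Fintype.card_fin, nsmul_eq_mul]
  field_simp

lemma variance_empiricalMean (hiid : iIndepFun X P) (hX : ∀ i, MeasurePreserving (X i) P μ)
    (hg_meas : Measurable g) (hg : MemLp g 2 μ) :
    variance (empiricalMean X g) P = (n : ℝ)⁻¹ * variance g μ := by
  have hsum : variance (∑ i, fun ω => g (X i ω)) P = n * variance g μ := by
    rw [IndepFun.variance_sum (X := fun i ω => g (X i ω))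
      (fun i _ => hg.comp_measurePreserving (hX i))
      fun i _ j _ hij => (hiid.indepFun hij).comp hg_meas hg_meas]
    simp [(hX _).variance_fun_comp hg_meas.aemeasurable]
  unfold empiricalMean
  rw [variance_const_mul, ← Finset.sum_fn, hsum]
  field_simp

end EmpiricalMean

theorem risk_estimate_bound_l2_general {Ω α : Type*} [MeasurableSpace Ω] [MeasurableSpace α]
    (P : Measure Ω) [IsProbabilityMeasure P] (μ : Measure α) [IsProbabilityMeasure μ]
    (n K : ℕ) (hn : 0 < n)
    (X : Fin n → Ω → α) (hXmeas : ∀ i, Measurable (X i))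
    (hiid : iIndepFun X P)
    (hdist : ∀ i, P.map (X i) = μ)
    (ℓ : ℝ) (hℓ : 0 ≤ ℓ)
    (qtar qstar L : α → Fin K → ℝ)
    (hqtar_meas : ∀ k, Measurable fun x => qtar x k)
    (hqstar_meas : ∀ k, Measurable fun x => qstar x k)
    (hL_meas : ∀ k, Measurable fun x => L x k)
    (hqtar_nonneg : ∀ x k, 0 ≤ qtar x k) (hqtar_sum : ∀ x, ∑ k, qtar x k = 1)
    (hqstar_nonneg : ∀ x k, 0 ≤ qstar x k) (hqstar_sum : ∀ x, ∑ k, qstar x k = 1)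
    (hLbound : ∀ x k, L x k ∈ Set.Icc (0 : ℝ) ℓ) :
    ∫ ω, ((n : ℝ)⁻¹ * (∑ i, ∑ k, qtar (X i ω) k * L (X i ω) k)
        - ∫ x, ∑ k, qstar x k * L x k ∂μ) ^ 2 ∂P
      ≤ (n : ℝ)⁻¹ * variance (fun x => ∑ k, qtar x k * L x k) μ
        + ℓ ^ 2 * K * (∫ x, Real.sqrt (∑ k, (qtar x k - qstar x k) ^ 2) ∂μ) ^ 2 := by
  set g : α → ℝ := fun x => ∑ k, qtar x k * L x k
  set h : α → ℝ := fun x => ∑ k, qstar x k * L x k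
  have hXμ : ∀ i, MeasurePreserving (X i) P μ := fun i => ⟨hXmeas i, hdist i⟩
  have hL : ∀ x k, |L x k| ≤ ℓ := fun x k =>
    abs_le.2 ⟨by linarith [(hLbound x k).1], (hLbound x k).2⟩
  have hg_meas : Measurable g := by fun_prop
  have hg : MemLp g 2 μ := MemLp.of_bound hg_meas.aestronglyMeasurable ℓ
    (ae_of_all _ fun x => abs_sum_mul_le_of_sum_eq_one (hqtar_nonneg x) (hqtar_sum x) (hL x))
  have hh : Integrable h μ := Integrable.of_bound (by fun_prop) ℓ
    (ae_of_all _ fun x => abs_sum_mul_le_of_sum_eq_one (hqstar_nonneg x) (hqstar_sum x) (hL x))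
  have hdiff_le : ∀ x, ‖√(∑ k, (qtar x k - qstar x k) ^ 2)‖ ≤ √K := fun x => by
    rw [Real.norm_of_nonneg (Real.sqrt_nonneg _)]
    simpa only [Fintype.card_fin] using Real.sqrt_le_sqrt (sum_sub_sq_le_card_of_sum_eq_one
      (hqtar_nonneg x) (hqtar_sum x) (hqstar_nonneg x) (hqstar_sum x))
  have hdiff : Integrable (fun x => √(∑ k, (qtar x k - qstar x k) ^ 2)) μ :=
    Integrable.of_bound (by fun_prop) √K (ae_of_all _ hdiff_le)
  change ∫ ω, (empiricalMean X g ω - ∫ x, h x ∂μ) ^ 2 ∂P ≤ _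
  rw [integral_sub_const_sq_eq_variance_add (memLp_empiricalMean hXμ hg),
    variance_empiricalMean hiid hXμ hg_meas hg,
    integral_empiricalMean hn.ne' hXμ (hg.integrable one_le_two)]
  gcongr
  simpa only [Fintype.card_fin] using
    sq_integral_sum_mul_sub_le hℓ hL (hg.integrable one_le_two) hh hdiff

/-- Variance-bias bound for the target-risk estimator, L2 version:
`E_D[(R_tar(f,D) - R(f))²] ≤ (1/n) Var_x[q_tarᵀL] + ℓ²K (E_x‖q_tar - q*‖₂)²`. -/
theorem risk_estimate_bound_l2 {Ω α : Type*} [MeasurableSpace Ω] [MeasurableSpace α]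
    (P : Measure Ω) [IsProbabilityMeasure P] (μ : Measure α) [IsProbabilityMeasure μ]
    (n K : ℕ) (hn : 0 < n) (hK : 1 ≤ K)
    (X : Fin n → Ω → α) (hXmeas : ∀ i, Measurable (X i))
    (hiid : iIndepFun X P)
    (hdist : ∀ i, P.map (X i) = μ)
    (ℓ : ℝ) (hℓ : 0 ≤ ℓ)
    (qtar qstar L : α → Fin K → ℝ)
    (hqtar_meas : ∀ k, Measurable fun x => qtar x k)
    (hqstar_meas : ∀ k, Measurable fun x => qstar x k)
    (hL_meas : ∀ k, Measurable fun x => L x k)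
    (hqtar_nonneg : ∀ x k, 0 ≤ qtar x k) (hqtar_sum : ∀ x, ∑ k, qtar x k = 1)
    (hqstar_nonneg : ∀ x k, 0 ≤ qstar x k) (hqstar_sum : ∀ x, ∑ k, qstar x k = 1)
    (hLbound : ∀ x k, L x k ∈ Set.Icc (0 : ℝ) ℓ) :
    ∫ ω, ((n : ℝ)⁻¹ * (∑ i, ∑ k, qtar (X i ω) k * L (X i ω) k)
        - ∫ x, ∑ k, qstar x k * L x k ∂μ) ^ 2 ∂P
      ≤ (n : ℝ)⁻¹ * variance (fun x => ∑ k, qtar x k * L x k) μ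
        + ℓ ^ 2 * K * (∫ x, Real.sqrt (∑ k, (qtar x k - qstar x k) ^ 2) ∂μ) ^ 2 :=
  risk_estimate_bound_l2_general P μ n K hn X hXmeas hiid hdist ℓ hℓ qtar qstar L hqtar_meas
    hqstar_meas hL_meas hqtar_nonneg hqtar_sum hqstar_nonneg hqstar_sum hLbound
end

section
/- Consider multinomial logistic regression with fixed feature h ∈ ℝ^d: p = σ(w h) for w ∈ ℝ^{V×d}, updated by one gradient-ascent step on the cross-entropy loss for label y⁻, i.e. w' = w + η (p - e_{y⁻}) hᵀ with η > 0. Then the new prediction p' = σ(w' h) satisfies p'_{y⁻} < p_{y⁻} provided p_{y⁻} < 1 and h ≠ 0. -/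
/-- Softmax. -/
noncomputable def softmax {V : ℕ} (z : Fin V → ℝ) : Fin V → ℝ :=
  fun i => Real.exp (z i) / ∑ j, Real.exp (z j)

/-- One-hot vector of a label. -/
def oneHot {V : ℕ} (y : Fin V) : Fin V → ℝ := fun i => if i = y then 1 else 0

/-- One gradient-ascent step on the cross-entropy loss for label `y⁻` strictly
decreases the predicted probability of `y⁻`, provided `p_{y⁻} < 1` and `h ≠ 0`. -/
theorem gradient_ascent_decreases_target {V d : ℕ}
    (w : Matrix (Fin V) (Fin d) ℝ) (h : Fin d → ℝ) (hh : h ≠ 0)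
    (yneg : Fin V) (η : ℝ) (hη : 0 < η)
    (p : Fin V → ℝ) (hp : p = softmax (w.mulVec h)) (hpy : p yneg < 1)
    (w' : Matrix (Fin V) (Fin d) ℝ)
    (hw' : w' = w + η • Matrix.vecMulVec (p - oneHot yneg) h)
    (p' : Fin V → ℝ) (hp' : p' = softmax (w'.mulVec h)) :
    p' yneg < p yneg := by
  set z : Fin V → ℝ := w.mulVec h with hz
  have hhh : 0 < dotProduct h h := by
    have hsum : dotProduct h h = ∑ j, h j * h j := rfl
    rw [hsum]
    obtain ⟨j, hj⟩ := Function.ne_iff.mp hh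
    exact Finset.sum_pos' (fun i _ => mul_self_nonneg _)
      ⟨j, Finset.mem_univ _, mul_self_pos.mpr hj⟩
  set c : ℝ := η * (dotProduct h h) with hcdef
  have hc : 0 < c := mul_pos hη hhh
  have hz' : ∀ i, w'.mulVec h i = z i + c * (p i - oneHot yneg i) := by
    intro i
    rw [hw']
    simp only [Matrix.add_mulVec, Matrix.smul_mulVec, Pi.add_apply, Pi.smul_apply,
      smul_eq_mul]
    congr 1
    have : (Matrix.vecMulVec (p - oneHot yneg) h).mulVec h i
        = (p i - oneHot yneg i) * (dotProduct h h) := by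
      simp [Matrix.mulVec, Matrix.vecMulVec, dotProduct, Finset.mul_sum, mul_assoc]
    rw [this]; ring
  have hppos : ∀ i, 0 < p i := by
    intro i
    rw [hp]
    exact div_pos (Real.exp_pos _) (Finset.sum_pos (fun j _ => Real.exp_pos _) ⟨yneg, Finset.mem_univ _⟩)
  have hex : ∃ j : Fin V, j ≠ yneg := by
    by_contra hco
    push_neg at hco
    have : p yneg = 1 := by
      rw [hp]
      unfold softmax
      rw [Finset.sum_eq_single yneg (fun j _ hj => absurd (hco j) hj) (by simp)]
      exact div_self (Real.exp_pos _).ne'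
    linarith
  obtain ⟨j₀, hj₀⟩ := hex
  rw [hp', hp]
  unfold softmax
  have hS : 0 < ∑ j, Real.exp (z j) :=
    Finset.sum_pos (fun j _ => Real.exp_pos _) ⟨yneg, Finset.mem_univ _⟩
  have hS' : 0 < ∑ j, Real.exp (w'.mulVec h j) :=
    Finset.sum_pos (fun j _ => Real.exp_pos _) ⟨yneg, Finset.mem_univ _⟩
  rw [div_lt_div_iff₀ hS' hS]
  rw [Finset.mul_sum, Finset.mul_sum]
  apply Finset.sum_lt_sum
  · intro i _
    rw [← Real.exp_add, ← Real.exp_add, Real.exp_le_exp, hz' yneg, hz' i]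
    by_cases hi : i = yneg
    · subst hi; linarith
    · have h1 : oneHot yneg i = 0 := by simp [oneHot, hi]
      have h2 : oneHot yneg yneg = 1 := by simp [oneHot]
      rw [h1, h2]
      nlinarith [hppos i, hppos yneg, hc]
  · refine ⟨j₀, Finset.mem_univ _, ?_⟩
    rw [← Real.exp_add, ← Real.exp_add, Real.exp_lt_exp, hz' yneg, hz' j₀]
    have h1 : oneHot yneg j₀ = 0 := by simp [oneHot, hj₀]
    have h2 : oneHot yneg yneg = 1 := by simp [oneHot]
    rw [h1, h2]
    nlinarith [hppos j₀, hc]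
end

section
/- In the same gradient-ascent setting, after the update w' = w + η(p - e_{y⁻})hᵀ, the logit of each class i ≠ y⁻ changes by η p_i ‖h‖², and the logit of y⁻ changes by η (p_{y⁻}-1) ‖h‖²; consequently, among classes i ≠ y⁻, the ratio p'_i/p_i is maximized at the class y* = argmax_{i ≠ y⁻} p_i, and p'_{y*} > p_{y*}. -/
/-!
The update adds `δ = η ‖h‖² (p - e_{y⁻})` to the logits. Adding `δ` to the logits multiplies
every softmax probability by `exp (δ i)` times a common normalising factor, so the ratios
`p'_i / p_i` are ordered like the `δ i`. Since `p_{y⁻} - 1 < 0 < p_{y*}`, the class `y*` has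
the strictly largest shift, so the normalising factor exceeds `exp (-δ y*)` and `p_{y*}` grows.
-/

open Finset Matrix

theorem Matrix.add_smul_vecMulVec_mulVec {m n : Type*} [Fintype n] (w : Matrix m n ℝ)
    (c : ℝ) (u : m → ℝ) (v x : n → ℝ) :
    (w + c • vecMulVec u v) *ᵥ x = w *ᵥ x + (c * (v ⬝ᵥ x)) • u := by
  rw [add_mulVec, smul_mulVec, vecMulVec_mulVec, op_smul_eq_smul, smul_smul]

section Softmax

theorem sum_exp_pos {ι : Type*} [Fintype ι] (z : ι → ℝ) (i : ι) : 0 < ∑ j, Real.exp (z j) :=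
  sum_pos (fun _ _ => Real.exp_pos _) ⟨i, mem_univ i⟩

variable {V : ℕ} (z δ : Fin V → ℝ)

theorem softmax_pos (i : Fin V) : 0 < softmax z i :=
  div_pos (Real.exp_pos _) (sum_exp_pos z i)

theorem softmax_le_one (i : Fin V) : softmax z i ≤ 1 :=
  div_le_one_of_le₀ (single_le_sum (fun j _ => (Real.exp_pos (z j)).le) (mem_univ i))
    (sum_exp_pos z i).le

theorem softmax_add_div_softmax (i : Fin V) :
    softmax (z + δ) i / softmax z i
      = Real.exp (δ i) * ((∑ j, Real.exp (z j)) / ∑ j, Real.exp (z j + δ j)) := by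
  have := sum_exp_pos z i
  simp only [softmax, Pi.add_apply, Real.exp_add]
  field_simp

variable {z δ}

theorem softmax_add_div_softmax_lt {i k : Fin V} (hδ : δ i < δ k) :
    softmax (z + δ) i / softmax z i < softmax (z + δ) k / softmax z k := by
  have := div_pos (sum_exp_pos z i) (sum_exp_pos (fun j => z j + δ j) i)
  rw [softmax_add_div_softmax, softmax_add_div_softmax]
  gcongr

theorem softmax_lt_softmax_add {k : Fin V} (hle : ∀ j, δ j ≤ δ k) (hlt : ∃ j, δ j < δ k) :
    softmax z k < softmax (z + δ) k := by
  have hsum : ∑ j, Real.exp (z j + δ j) < Real.exp (δ k) * ∑ j, Real.exp (z j) := by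
    rw [mul_sum]
    obtain ⟨j₀, hj₀⟩ := hlt
    refine sum_lt_sum (fun j _ => ?_) ⟨j₀, mem_univ j₀, ?_⟩ <;>
      rw [Real.exp_add, mul_comm (Real.exp (δ k))]
    · gcongr
      exact hle j
    · gcongr
  rwa [← one_lt_div (softmax_pos z k), softmax_add_div_softmax, ← mul_div_assoc,
    one_lt_div (sum_exp_pos (fun j => z j + δ j) k)]

end Softmax

theorem gradient_ascent_squeezing_general {V d : ℕ}
    (w : Matrix (Fin V) (Fin d) ℝ) (h : Fin d → ℝ) (hh : h ≠ 0)
    (yneg ystar : Fin V) (hne : ystar ≠ yneg) (η : ℝ) (hη : 0 < η)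
    (p : Fin V → ℝ) (hp : p = softmax (w.mulVec h))
    (hmax : ∀ i, i ≠ yneg → i ≠ ystar → p i < p ystar)
    (w' : Matrix (Fin V) (Fin d) ℝ)
    (hw' : w' = w + η • Matrix.vecMulVec (p - oneHot yneg) h)
    (p' : Fin V → ℝ) (hp' : p' = softmax (w'.mulVec h)) :
    (∀ i, i ≠ yneg → w'.mulVec h i - w.mulVec h i = η * p i * ∑ j, (h j) ^ 2)
    ∧ (w'.mulVec h yneg - w.mulVec h yneg = η * (p yneg - 1) * ∑ j, (h j) ^ 2)
    ∧ (∀ i, i ≠ yneg → i ≠ ystar → p' i / p i < p' ystar / p ystar)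
    ∧ p ystar < p' ystar := by
  set H := ∑ j, (h j) ^ 2
  have hH_eq : h ⬝ᵥ h = H := by simp only [dotProduct, sq, H]
  have hH : 0 < H := hH_eq ▸ dotProduct_self_star_pos_iff.mpr hh
  set δ := (η * H) • (p - oneHot yneg)
  have hlogit : w' *ᵥ h = w *ᵥ h + δ := by
    rw [hw', add_smul_vecMulVec_mulVec, hH_eq]
  have hδ : ∀ i, i ≠ yneg → δ i = η * p i * H := fun i hi => by
    simp only [δ, Pi.smul_apply, Pi.sub_apply, oneHot, hi, ↓reduceIte, sub_zero, smul_eq_mul]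
    ring
  have hδ_neg : δ yneg = η * (p yneg - 1) * H := by
    simp only [δ, Pi.smul_apply, Pi.sub_apply, oneHot, ↓reduceIte, smul_eq_mul]
    ring
  have hδ_neg_lt : δ yneg < δ ystar := by
    rw [hδ_neg, hδ ystar hne]
    have : p yneg - 1 < p ystar := by
      linarith [hp ▸ softmax_le_one _ yneg, hp ▸ softmax_pos _ ystar]
    gcongr
  have hδ_lt : ∀ i, i ≠ yneg → i ≠ ystar → δ i < δ ystar := fun i hi his => by
    rw [hδ i hi, hδ ystar hne]
    gcongr
    exact hmax i hi his
  have hδ_le : ∀ j, δ j ≤ δ ystar := fun j => by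
    rcases eq_or_ne j yneg with rfl | hj
    · exact hδ_neg_lt.le
    rcases eq_or_ne j ystar with rfl | hjs
    · exact le_rfl
    · exact (hδ_lt j hj hjs).le
  refine ⟨fun i hi => by rw [hlogit, Pi.add_apply, add_sub_cancel_left, hδ i hi],
    by rw [hlogit, Pi.add_apply, add_sub_cancel_left, hδ_neg], fun i hi his => ?_, ?_⟩
  · have := softmax_add_div_softmax_lt (z := w *ᵥ h) (hδ_lt i hi his)
    rwa [← hlogit, ← hp', ← hp] at this
  · have := softmax_lt_softmax_add (z := w *ᵥ h) hδ_le ⟨yneg, hδ_neg_lt⟩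
    rwa [← hlogit, ← hp', ← hp] at this

/-- After the gradient-ascent update `w' = w + η(p - e_{y⁻})hᵀ`, the logit of each
class `i ≠ y⁻` changes by `η p_i ‖h‖²`, the logit of `y⁻` changes by
`η(p_{y⁻} - 1)‖h‖²`; among classes `i ≠ y⁻` the ratio `p'_i/p_i` is (strictly)
maximized at the class `y*` with maximal `p_i`, and `p'_{y*} > p_{y*}`. -/
theorem gradient_ascent_squeezing {V d : ℕ} (hV : 3 ≤ V)
    (w : Matrix (Fin V) (Fin d) ℝ) (h : Fin d → ℝ) (hh : h ≠ 0)
    (yneg ystar : Fin V) (hne : ystar ≠ yneg) (η : ℝ) (hη : 0 < η)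
    (p : Fin V → ℝ) (hp : p = softmax (w.mulVec h))
    (hmax : ∀ i, i ≠ yneg → i ≠ ystar → p i < p ystar)
    (w' : Matrix (Fin V) (Fin d) ℝ)
    (hw' : w' = w + η • Matrix.vecMulVec (p - oneHot yneg) h)
    (p' : Fin V → ℝ) (hp' : p' = softmax (w'.mulVec h)) :
    (∀ i, i ≠ yneg → w'.mulVec h i - w.mulVec h i = η * p i * ∑ j, (h j) ^ 2)
    ∧ (w'.mulVec h yneg - w.mulVec h yneg = η * (p yneg - 1) * ∑ j, (h j) ^ 2)
    ∧ (∀ i, i ≠ yneg → i ≠ ystar → p' i / p i < p' ystar / p ystar)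
    ∧ p ystar < p' ystar :=
  gradient_ascent_squeezing_general w h hh yneg ystar hne η hη p hp hmax w' hw' p' hp'
end
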